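/- arXiv:1012.4199 — 3 statements merged into one kernel-verified Lean document; each statement's English description precedes it below -/
import Mathlib

section
/- Let D ⊆ ℝ and let a_α ≥ 0 for α ∈ D. Suppose the series ∑_{α∈D} a_α r₁^α and ∑_{α∈D} a_α r₂^α converge, where 0 < r₁ < r₂, and let r₁ < r < r₂. Then the series ∑_{α∈D} a_α α r^α converges absolutely. -/
lemma aux_t_exp (c t : ℝ) (hc : 0 < c) (ht : 0 ≤ t) :
    t * Real.exp (-(c * t)) ≤ 1 / c := by
  rw [Real.exp_neg, ← div_eq_mul_inv, div_le_div_iff₀ (Real.exp_pos _) hc]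
  nlinarith [Real.add_one_le_exp (c * t)]

/-- If a generalized power series with nonnegative coefficients and real
exponents converges (is summable) at two radii `r₁ < r₂`, then the term-wise
differentiated series `∑_{α ∈ D} a_α α r^α` converges absolutely at every radius `r`
with `r₁ < r < r₂`. -/
theorem stmt_1 (D : Set ℝ) (a : ℝ → ℝ) (ha : ∀ α, 0 ≤ a α)
    (r₁ r r₂ : ℝ) (h0 : 0 < r₁) (h1r : r₁ < r) (hr2 : r < r₂)
    (h1 : Summable fun α : D => a (α : ℝ) * r₁ ^ (α : ℝ))
    (h2 : Summable fun α : D => a (α : ℝ) * r₂ ^ (α : ℝ)) :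
    Summable fun α : D => a (α : ℝ) * |(α : ℝ)| * r ^ (α : ℝ) := by
  have hr : 0 < r := h0.trans h1r
  have hr₂ : 0 < r₂ := hr.trans hr2
  set c₁ : ℝ := Real.log (r / r₁) with hc₁def
  set c₂ : ℝ := Real.log (r₂ / r) with hc₂def
  have hc₁ : 0 < c₁ := Real.log_pos ((one_lt_div h0).mpr h1r)
  have hc₂ : 0 < c₂ := Real.log_pos ((one_lt_div hr).mpr hr2)
  set C : ℝ := 1 / c₁ + 1 / c₂ with hCdef
  have key : ∀ α : ℝ, |α| * r ^ α ≤ C * (r₁ ^ α + r₂ ^ α) := by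
    intro α
    have hp1 : (0:ℝ) ≤ r₁ ^ α := (Real.rpow_pos_of_pos h0 α).le
    have hp2 : (0:ℝ) ≤ r₂ ^ α := (Real.rpow_pos_of_pos hr₂ α).le
    rcases le_total 0 α with hα | hα
    · rw [abs_of_nonneg hα]
      have heq : r ^ α = r₂ ^ α * Real.exp (-(c₂ * α)) := by
        rw [Real.rpow_def_of_pos hr, Real.rpow_def_of_pos hr₂, ← Real.exp_add,
          hc₂def, Real.log_div hr₂.ne' hr.ne']
        ring_nf
      have hb : α * Real.exp (-(c₂ * α)) ≤ 1 / c₂ := aux_t_exp c₂ α hc₂ hα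
      have : α * r ^ α ≤ r₂ ^ α * (1 / c₂) := by
        rw [heq]
        calc α * (r₂ ^ α * Real.exp (-(c₂ * α)))
            = r₂ ^ α * (α * Real.exp (-(c₂ * α))) := by ring
          _ ≤ r₂ ^ α * (1 / c₂) := by
              exact mul_le_mul_of_nonneg_left hb hp2
      have h1c : 0 < 1 / c₁ := by positivity
      have h2c : 0 < 1 / c₂ := by positivity
      rw [hCdef]
      nlinarith [mul_nonneg h1c.le hp1, mul_nonneg h1c.le hp2, mul_nonneg h2c.le hp1]
    · rw [abs_of_nonpos hα]
      have heq : r ^ α = r₁ ^ α * Real.exp (-(c₁ * (-α))) := by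
        rw [Real.rpow_def_of_pos hr, Real.rpow_def_of_pos h0, ← Real.exp_add,
          hc₁def, Real.log_div hr.ne' h0.ne']
        ring_nf
      have hb : (-α) * Real.exp (-(c₁ * (-α))) ≤ 1 / c₁ := aux_t_exp c₁ (-α) hc₁ (neg_nonneg.mpr hα)
      have : (-α) * r ^ α ≤ r₁ ^ α * (1 / c₁) := by
        rw [heq]
        calc (-α) * (r₁ ^ α * Real.exp (-(c₁ * (-α))))
            = r₁ ^ α * ((-α) * Real.exp (-(c₁ * (-α)))) := by ring
          _ ≤ r₁ ^ α * (1 / c₁) := mul_le_mul_of_nonneg_left hb hp1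
      have h1c : 0 < 1 / c₁ := by positivity
      have h2c : 0 < 1 / c₂ := by positivity
      rw [hCdef]
      nlinarith [mul_nonneg h2c.le hp1, mul_nonneg h2c.le hp2, mul_nonneg h1c.le hp2]
  refine Summable.of_nonneg_of_le
    (f := fun α : D => C * (a (α : ℝ) * r₁ ^ (α : ℝ) + a (α : ℝ) * r₂ ^ (α : ℝ)))
    ?_ ?_ ((h1.add h2).mul_left C)
  · intro α
    have := ha (α : ℝ)
    have := (Real.rpow_pos_of_pos hr (α : ℝ)).le
    positivity
  · intro α
    have hk := key (α : ℝ)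
    have haa := ha (α : ℝ)
    calc a (α : ℝ) * |(α : ℝ)| * r ^ (α : ℝ)
        = a (α : ℝ) * (|(α : ℝ)| * r ^ (α : ℝ)) := by ring
      _ ≤ a (α : ℝ) * (C * (r₁ ^ (α : ℝ) + r₂ ^ (α : ℝ))) :=
          mul_le_mul_of_nonneg_left hk haa
      _ = C * (a (α : ℝ) * r₁ ^ (α : ℝ) + a (α : ℝ) * r₂ ^ (α : ℝ)) := by ring
end

section
/- ℤ × {0, …, N} is a unique expansion set for every N ∈ ℕ: if a_{n,i} ∈ ℂ for n ∈ ℤ, 0 ≤ i ≤ N, and ∑_{n∈ℤ} ∑_{i=0}^N a_{n,i} z^n (log z)^i converges absolutely to 0 for all z in a nonempty open subset of ℂ \ {0}, then all a_{n,i} = 0. -/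
/-!
Write `z = exp w` with `0 < Im w < 2π`, so that `logBranch z = w`. The series becomes
`G w = ∑ᵢ gᵢ(w) wⁱ` with `gᵢ(w) = ∑ₙ a n i exp (n w)`. Absolute convergence at the two ends of a
short horizontal segment makes every `gᵢ` holomorphic on the vertical strip between them, so `G`,
which vanishes near the segment, vanishes on the whole strip by the identity theorem. Each `gᵢ` is
`2πi`-periodic, so for fixed `w` the polynomial `∑ᵢ gᵢ(w) Xⁱ` of degree `≤ N` vanishes at the
`N + 1` points `w + 2πik`, hence `gᵢ = 0` on the strip. On a vertical line `gᵢ` is an absolutely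
convergent Fourier series, so its coefficients `a n i exp (n σ)` vanish.
-/

/-- The branch of the logarithm with argument in `[0, 2π)`. -/
noncomputable def logBranch (z : ℂ) : ℂ :=
  Real.log ‖z‖ +
    (if 0 ≤ z.arg then (z.arg : ℝ) else z.arg + 2 * Real.pi) * Complex.I

open Complex Set MeasureTheory AddCircle
open scoped Real

theorem logBranch_eq_log_add (z : ℂ) : ∃ k : ℤ, logBranch z = log z + k * (2 * π * I) := by
  by_cases h : 0 ≤ z.arg
  · exact ⟨0, by simp [logBranch, log, h]⟩
  · exact ⟨1, by simp [logBranch, log, h]; ring⟩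

theorem exp_logBranch {z : ℂ} (hz : z ≠ 0) : exp (logBranch z) = z := by
  obtain ⟨k, hk⟩ := logBranch_eq_log_add z
  rw [hk, exp_add, exp_log hz, exp_int_mul_two_pi_mul_I, mul_one]

theorem logBranch_im (z : ℂ) :
    (logBranch z).im = if 0 ≤ z.arg then z.arg else z.arg + 2 * π := by
  unfold logBranch
  split_ifs <;> simp

theorem logBranch_im_mem_Ico (z : ℂ) : (logBranch z).im ∈ Ico 0 (2 * π) := by
  have := neg_pi_lt_arg z
  have := arg_le_pi z
  rw [logBranch_im]
  split_ifs <;> constructor <;> linarith [Real.pi_pos]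

theorem logBranch_im_pos {z : ℂ} (hz : z.im ≠ 0) : 0 < (logBranch z).im := by
  have harg : z.arg ≠ 0 := fun h => hz (arg_eq_zero_iff.mp h).2
  rw [logBranch_im]
  split_ifs with h
  · exact lt_of_le_of_ne h harg.symm
  · linarith [neg_pi_lt_arg z]

theorem logBranch_exp {w : ℂ} (hw : w.im ∈ Ico 0 (2 * π)) : logBranch (exp w) = w := by
  obtain ⟨k, hk⟩ := exp_eq_exp_iff_exists_int.mp (exp_logBranch (exp_ne_zero w))
  have him : (logBranch (exp w)).im = w.im + k * (2 * π) := by simpa using congrArg im hk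
  have hL := logBranch_im_mem_Ico (exp w)
  rw [him] at hL
  have hk0 : k = 0 := by
    have h₁ : ((-1 : ℤ) : ℝ) < k := by push_cast; nlinarith [Real.pi_pos, hw.2, hL.1]
    have h₂ : (k : ℝ) < (1 : ℤ) := by push_cast; nlinarith [Real.pi_pos, hw.1, hL.2]
    have := Int.cast_lt.mp h₁
    have := Int.cast_lt.mp h₂
    omega
  simpa [hk0] using hk

theorem exists_mem_im_ne_zero {U : Set ℂ} (hU : IsOpen U) (hUne : U.Nonempty) :
    ∃ z ∈ U, z.im ≠ 0 := by
  by_contra! h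
  have : U ⊆ interior (im ⁻¹' {0}) := hU.subset_interior_iff.mpr h
  rw [interior_preimage_im, interior_singleton, preimage_empty] at this
  exact hUne.ne_empty (subset_empty_iff.mp this)

theorem fourierCoeff_tsum_smul_fourier {T : ℝ} [Fact (0 < T)] {c : ℤ → ℂ}
    (hc : Summable fun m => ‖c m‖) (n : ℤ) :
    fourierCoeff (fun x : AddCircle T => ∑' m, c m • fourier m x) n = c n := by
  have hint : ∀ m, Integrable (fun x => fourier (-n) x • c m • fourier m x)
      (haarAddCircle (T := T)) := fun m =>
    Continuous.integrable_of_hasCompactSupport (by fun_prop) (.of_compactSpace _)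
  have hnorm :
      ∀ m, ∫ x, ‖fourier (-n) x • c m • fourier m x‖ ∂haarAddCircle (T := T) = ‖c m‖ := by
    simp [Circle.norm_coe]
  calc fourierCoeff (fun x : AddCircle T => ∑' m, c m • fourier m x) n
      = ∑' m, ∫ x, fourier (-n) x • c m • fourier m x ∂haarAddCircle (T := T) := by
        rw [fourierCoeff, integral_tsum_of_summable_integral_norm hint (by simpa only [hnorm])]
        simp_rw [smul_eq_mul, tsum_mul_left]
    _ = ∑' m, c m * Pi.single (M := fun _ => ℂ) m 1 n := by
        congr with m
        rw [← fourierCoeff_fourier (T := T), ← smul_eq_mul, ← fourierCoeff.const_smul]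
        rfl
    _ = c n := by simp [Pi.single_apply]

theorem eq_zero_of_sum_mul_add_mul_pow_eq_zero {K : Type*} [Field K] [CharZero K] {d : ℕ}
    {c : Fin d → K} {w p : K} (hp : p ≠ 0)
    (h : ∀ k : Fin d, ∑ i, c i * (w + k * p) ^ (i : ℕ) = 0) : c = 0 := by
  refine Matrix.eq_zero_of_forall_index_sum_mul_pow_eq_zero (f := fun k => w + k * p)
    (fun k l hkl => ?_) h
  simpa [hp, Fin.val_inj] using hkl

noncomputable def expLaurent (a : ℤ → ℂ) (w : ℂ) : ℂ := ∑' n : ℤ, a n * exp (n * w)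

theorem expLaurent_periodic (a : ℤ → ℂ) : Function.Periodic (expLaurent a) (2 * π * I) := by
  intro w
  simp only [expLaurent, mul_add, exp_add, exp_int_mul_two_pi_mul_I, mul_one]

theorem norm_exp_int_mul (n : ℤ) (w : ℂ) : ‖exp (n * w)‖ = Real.exp (n * w.re) := by
  simp [norm_exp]

theorem eq_zero_of_expLaurent_eq_zero {a : ℤ → ℂ} {σ : ℝ}
    (hσ : Summable fun n : ℤ => ‖a n‖ * Real.exp (n * σ))
    (h : ∀ θ : ℝ, expLaurent a (σ + θ * I) = 0) : a = 0 := by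
  have : Fact (0 < 2 * π) := ⟨by positivity⟩
  set c : ℤ → ℂ := fun n => a n * exp (n * σ)
  have hc : Summable fun n => ‖c n‖ := by simpa [c, norm_exp_int_mul] using hσ
  have hzero : (fun x : AddCircle (2 * π) => ∑' n, c n • fourier n x) = 0 := by
    funext x
    induction x using QuotientAddGroup.induction_on with | H θ => ?_
    rw [Pi.zero_apply, ← h θ, expLaurent]
    congr with n
    rw [fourier_coe_apply, smul_eq_mul, mul_assoc, ← exp_add]
    congr 2
    push_cast
    field_simp
  funext n
  have hcn := fourierCoeff_tsum_smul_fourier (T := 2 * π) hc n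
  rw [hzero] at hcn
  have : c n = 0 := by simpa [fourierCoeff] using hcn.symm
  simpa [c] using this

theorem exp_mul_le_exp_mul_add_exp_mul {σ₁ σ₂ x : ℝ} (h₁ : σ₁ ≤ x) (h₂ : x ≤ σ₂) (t : ℝ) :
    Real.exp (t * x) ≤ Real.exp (t * σ₁) + Real.exp (t * σ₂) := by
  rcases le_total 0 t with ht | ht
  · exact le_add_of_nonneg_of_le (Real.exp_nonneg _)
      (Real.exp_le_exp.mpr (mul_le_mul_of_nonneg_left h₂ ht))
  · exact le_add_of_le_of_nonneg (Real.exp_le_exp.mpr (mul_le_mul_of_nonpos_left h₁ ht))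
      (Real.exp_nonneg _)

theorem differentiableOn_expLaurent {a : ℤ → ℂ} {σ₁ σ₂ : ℝ}
    (h₁ : Summable fun n : ℤ => ‖a n‖ * Real.exp (n * σ₁))
    (h₂ : Summable fun n : ℤ => ‖a n‖ * Real.exp (n * σ₂)) :
    DifferentiableOn ℂ (expLaurent a) (re ⁻¹' Ioo σ₁ σ₂) := by
  refine differentiableOn_tsum_of_summable_norm (h₁.add h₂) (fun n => by fun_prop)
    (isOpen_Ioo.preimage continuous_re) fun n w hw => ?_
  rw [norm_mul, norm_exp_int_mul, ← mul_add]
  exact mul_le_mul_of_nonneg_left (exp_mul_le_exp_mul_add_exp_mul hw.1.le hw.2.le n)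
    (norm_nonneg _)

section expLogSeries

variable {d : ℕ} (a : ℤ → Fin d → ℂ)

/-- `∑ₙ ∑ᵢ a n i zⁿ (log z)ⁱ` in the coordinate `w = log z`. -/
noncomputable def expLogSeries (w : ℂ) : ℂ := ∑ i, expLaurent (a · i) w * w ^ (i : ℕ)

theorem summable_norm_mul_exp_re {w : ℂ} (hw : w ≠ 0)
    (hs : Summable fun p : ℤ × Fin d => ‖a p.1 p.2 * exp w ^ p.1 * w ^ (p.2 : ℕ)‖) (i : Fin d) :
    Summable fun n : ℤ => ‖a n i‖ * Real.exp (n * w.re) := by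
  have hfiber := (hs.comp_injective (Prod.mk_left_injective i)).mul_right (‖w‖ ^ (i : ℕ))⁻¹
  refine hfiber.congr fun n => ?_
  have : ‖w‖ ^ (i : ℕ) ≠ 0 := by positivity
  simp only [Function.comp_apply, norm_mul, norm_pow, ← exp_int_mul, norm_exp_int_mul]
  field_simp

theorem expLogSeries_eq_tsum {w : ℂ}
    (hs : Summable fun p : ℤ × Fin d => a p.1 p.2 * exp w ^ p.1 * w ^ (p.2 : ℕ)) :
    expLogSeries a w = ∑' p : ℤ × Fin d, a p.1 p.2 * exp w ^ p.1 * w ^ (p.2 : ℕ) := by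
  rw [hs.tsum_prod,
    ← Summable.tsum_comm (f := fun n (i : Fin d) => a n i * exp w ^ n * w ^ (i : ℕ)) hs,
    tsum_fintype, expLogSeries]
  congr with i
  simp_rw [expLaurent, ← tsum_mul_right, exp_int_mul]

theorem differentiableOn_expLogSeries {σ₁ σ₂ : ℝ}
    (h₁ : ∀ i, Summable fun n : ℤ => ‖a n i‖ * Real.exp (n * σ₁))
    (h₂ : ∀ i, Summable fun n : ℤ => ‖a n i‖ * Real.exp (n * σ₂)) :
    DifferentiableOn ℂ (expLogSeries a) (re ⁻¹' Ioo σ₁ σ₂) :=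
  DifferentiableOn.fun_sum fun i _ =>
    (differentiableOn_expLaurent (h₁ i) (h₂ i)).mul (differentiable_pow _).differentiableOn

theorem expLogSeries_eqOn_zero_of_eventuallyEq {σ₁ σ₂ : ℝ}
    (h₁ : ∀ i, Summable fun n : ℤ => ‖a n i‖ * Real.exp (n * σ₁))
    (h₂ : ∀ i, Summable fun n : ℤ => ‖a n i‖ * Real.exp (n * σ₂))
    {w₀ : ℂ} (hw₀ : w₀.re ∈ Ioo σ₁ σ₂) (h : expLogSeries a =ᶠ[nhds w₀] 0) :
    EqOn (expLogSeries a) 0 (re ⁻¹' Ioo σ₁ σ₂) :=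
  ((differentiableOn_expLogSeries a h₁ h₂).analyticOnNhd (isOpen_Ioo.preimage continuous_re)
    ).eqOn_zero_of_preconnected_of_eventuallyEq_zero
    ((convex_Ioo σ₁ σ₂).linear_preimage reLm).isPreconnected hw₀ h

theorem expLaurent_eqOn_zero_of_expLogSeries_eqOn_zero {s : Set ℝ}
    (h : EqOn (expLogSeries a) 0 (re ⁻¹' s)) (i : Fin d) :
    EqOn (expLaurent (a · i)) 0 (re ⁻¹' s) := by
  intro w hw
  have hp : 2 * (π : ℂ) * I ≠ 0 := by simp [Real.pi_ne_zero, I_ne_zero]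
  refine congrFun (eq_zero_of_sum_mul_add_mul_pow_eq_zero
    (c := fun i => expLaurent (a · i) w) (w := w) hp fun k => ?_) i
  have := h (x := w + (k : ℕ) * (2 * π * I)) (by simpa using hw)
  have hper : ∀ j, expLaurent (a · j) (w + (k : ℕ) * (2 * π * I)) = expLaurent (a · j) w :=
    fun j => (expLaurent_periodic _).nat_mul k w
  simpa only [expLogSeries, hper, Pi.zero_apply] using this

theorem eq_zero_of_expLogSeries_eqOn_zero {V : Set ℂ} (hV : IsOpen V) (hVne : V.Nonempty)
    (hsumm : ∀ w ∈ V, ∀ i, Summable fun n : ℤ => ‖a n i‖ * Real.exp (n * w.re))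
    (hzero : EqOn (expLogSeries a) 0 V) : a = 0 := by
  obtain ⟨w₀, hw₀⟩ := hVne
  obtain ⟨ε, hε, hball⟩ := Metric.isOpen_iff.mp hV _ hw₀
  have hshift : ∀ t : ℝ, |t| < ε → w₀ + t ∈ V := fun t ht =>
    hball (by simpa [dist_eq] using ht)
  have hε' : |ε / 2| < ε := by rw [abs_of_pos (half_pos hε)]; exact half_lt_self hε
  have hstrip : EqOn (expLogSeries a) 0 (re ⁻¹' Ioo (w₀.re - ε / 2) (w₀.re + ε / 2)) := by
    refine expLogSeries_eqOn_zero_of_eventuallyEq a (fun i => ?_) (fun i => ?_) ?_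
      (Filter.eventuallyEq_of_mem (hV.mem_nhds hw₀) hzero)
    · simpa [sub_eq_add_neg] using hsumm _ (hshift (-(ε / 2)) (by rwa [abs_neg])) i
    · simpa using hsumm _ (hshift (ε / 2) hε') i
    · constructor <;> linarith
  funext n i
  have := eq_zero_of_expLaurent_eq_zero (hsumm _ hw₀ i) fun θ =>
    expLaurent_eqOn_zero_of_expLogSeries_eqOn_zero a hstrip i (by simp [hε])
  exact congrFun this n

end expLogSeries

theorem stmt_6_general (N : ℕ) (a : ℤ → Fin (N + 1) → ℂ)
    (U : Set ℂ) (hU : IsOpen U) (hUne : U.Nonempty)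
    (habs : ∀ z ∈ U, Summable fun p : ℤ × Fin (N + 1) =>
      ‖a p.1 p.2 * z ^ p.1 * (logBranch z) ^ (p.2 : ℕ)‖)
    (hsum : ∀ z ∈ U, HasSum
      (fun p : ℤ × Fin (N + 1) => a p.1 p.2 * z ^ p.1 * (logBranch z) ^ (p.2 : ℕ)) 0) :
    ∀ (n : ℤ) (i : Fin (N + 1)), a n i = 0 := by
  obtain ⟨z₀, hz₀U, hz₀⟩ := exists_mem_im_ne_zero hU hUne
  set V := exp ⁻¹' U ∩ im ⁻¹' Ioo 0 (2 * π)
  have hV : IsOpen V := (hU.preimage continuous_exp).inter (isOpen_Ioo.preimage continuous_im)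
  have hw₀ : logBranch z₀ ∈ V :=
    ⟨by rwa [mem_preimage, exp_logBranch (by rintro rfl; simp at hz₀)],
      logBranch_im_pos hz₀, (logBranch_im_mem_Ico z₀).2⟩
  have hlog : ∀ w ∈ V, logBranch (exp w) = w := fun w hw =>
    logBranch_exp (Ioo_subset_Ico_self hw.2)
  have hsumm : ∀ w ∈ V, ∀ i, Summable fun n : ℤ => ‖a n i‖ * Real.exp (n * w.re) := by
    intro w hw
    refine summable_norm_mul_exp_re a (fun h => ?_) (by simpa [hlog w hw] using habs _ hw.1)
    simpa [h] using hw.2.1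
  have hzero : EqOn (expLogSeries a) 0 V := by
    intro w hw
    rw [expLogSeries_eq_tsum a (by simpa [hlog w hw] using (habs _ hw.1).of_norm)]
    simpa [hlog w hw] using (hsum _ hw.1).tsum_eq
  intro n i
  rw [eq_zero_of_expLogSeries_eqOn_zero a hV ⟨_, hw₀⟩ hsumm hzero, Pi.zero_apply, Pi.zero_apply]

/-- `ℤ × {0,…,N}` is a unique expansion set: if
`∑_{n ∈ ℤ} ∑_{i=0}^N a_{n,i} z^n (log z)^i` converges absolutely to `0` for all `z`
in a nonempty open subset of `ℂ \ {0}`, then all `a_{n,i} = 0`. -/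
theorem stmt_6 (N : ℕ) (a : ℤ → Fin (N + 1) → ℂ)
    (U : Set ℂ) (hU : IsOpen U) (hUne : U.Nonempty) (hU0 : (0 : ℂ) ∉ U)
    (habs : ∀ z ∈ U, Summable fun p : ℤ × Fin (N + 1) =>
      ‖a p.1 p.2 * z ^ p.1 * (logBranch z) ^ (p.2 : ℕ)‖)
    (hsum : ∀ z ∈ U, HasSum
      (fun p : ℤ × Fin (N + 1) => a p.1 p.2 * z ^ p.1 * (logBranch z) ^ (p.2 : ℕ)) 0) :
    ∀ (n : ℤ) (i : Fin (N + 1)), a n i = 0 :=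
  stmt_6_general N a U hU hUne habs hsum
end

section
/- In the formal calculus of delta functions, the identity x₁⁻¹δ((x₀ - y₁)/x₁) · x₂⁻¹δ((x₀ - y₂)/x₂) = x₂⁻¹δ((x₀ - y₂)/x₂) · x₁⁻¹δ((x₂ - (y₁ - y₂))/x₁) holds in ℂ[y₁, y₂]((x₀⁻¹))[[x₁, x₁⁻¹, x₂, x₂⁻¹]], where (x₀ - y)ⁿ is expanded in nonnegative powers of y and (x₂ - (y₁-y₂))ⁿ in nonnegative powers of y₁ - y₂ (i.e., of y₁ and y₂). -/
/-- Generalized binomial coefficient `C(m, j)` for `m ∈ ℤ`, `j ∈ ℕ`, as a complex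
number: `m(m-1)⋯(m-j+1)/j!`. -/
noncomputable def genChoose (m : ℤ) (j : ℕ) : ℂ :=
  (∏ i ∈ Finset.range j, ((m : ℂ) - (i : ℂ))) / (Nat.factorial j : ℂ)

/-- Coefficient of `x₀^e₀ x₁^e₁ x₂^e₂ y₁^j₁ y₂^j₂` in the formal product
`x₁⁻¹δ((x₀ - y₁)/x₁) · x₂⁻¹δ((x₀ - y₂)/x₂)`, where
`x⁻¹δ((u - y)/x) = ∑_{n ∈ ℤ} (u - y)^n x^{-n-1}` and `(u - y)^n` is expanded in
nonnegative powers of `y`. -/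
noncomputable def lhsDeltaCoeff (e₀ e₁ e₂ : ℤ) (j₁ j₂ : ℕ) : ℂ :=
  if e₀ = (-e₁ - 1 - (j₁ : ℤ)) + (-e₂ - 1 - (j₂ : ℤ)) then
    genChoose (-e₁ - 1) j₁ * (-1) ^ j₁ * genChoose (-e₂ - 1) j₂ * (-1) ^ j₂
  else 0

/-- Coefficient of `x₀^a x₂^b y₂^c` in `x₂⁻¹δ((x₀ - y₂)/x₂)`. -/
noncomputable def deltaCoeffA (a b : ℤ) (c : ℕ) : ℂ :=
  if a = -b - 1 - (c : ℤ) then genChoose (-b - 1) c * (-1) ^ c else 0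

/-- Coefficient of `x₁^d x₂^e y₁^f y₂^g` in `x₁⁻¹δ((x₂ - (y₁ - y₂))/x₁)`, where
`(x₂ - (y₁ - y₂))^m` is expanded in nonnegative powers of `y₁ - y₂` (hence of
`y₁` and `y₂`). -/
noncomputable def deltaCoeffB (d e : ℤ) (f g : ℕ) : ℂ :=
  if e = -d - 1 - ((f + g : ℕ) : ℤ) then
    genChoose (-d - 1) (f + g) * (-1) ^ (f + g) * (Nat.choose (f + g) g : ℂ) * (-1) ^ g
  else 0

/-- Coefficient of `x₀^e₀ x₁^e₁ x₂^e₂ y₁^j₁ y₂^j₂` in the formal product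
`x₂⁻¹δ((x₀ - y₂)/x₂) · x₁⁻¹δ((x₂ - (y₁ - y₂))/x₁)`, obtained by summing over the
splittings of the `x₂`- and `y₂`-exponents between the two factors. -/
noncomputable def rhsDeltaCoeff (e₀ e₁ e₂ : ℤ) (j₁ j₂ : ℕ) : ℂ :=
  ∑' b : ℤ, ∑ c ∈ Finset.range (j₂ + 1),
    deltaCoeffA e₀ b c * deltaCoeffB e₁ (e₂ - b) j₁ (j₂ - c)

/-!
Both sides are compared coefficientwise. On the right, the `x₀`-exponent forces the `x₂`-exponent
`b` of the first factor, so the coefficient is a finite sum over the split `c + g = j₂` of the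
`y₂`-exponent. Writing `m = -e₁ - 1`, `p = -e₂ - 1` and `q = m + p - j₁ - j₂`, the summand is
`(-1)^j₁ C(m, j₁) · C(-q - 1, c) C(m - j₁, g)`, by upper negation and
`C(m, j₁ + g) C(j₁ + g, g) = C(m, j₁) C(m - j₁, g)`. Chu–Vandermonde sums this to
`(-1)^j₁ C(m, j₁) C(-(p - j₂) - 1, j₂) = (-1)^(j₁ + j₂) C(m, j₁) C(p, j₂)`, the left coefficient.
-/

open Finset Polynomial

theorem Ring.choose_neg_sub_one {R : Type*} [CommRing R] [BinomialRing R] (r : R) (k : ℕ) :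
    Ring.choose (-r - 1) k = (-1) ^ k * Ring.choose (r + k) k := by
  rw [← neg_add', Ring.choose_neg, Units.smul_def, zsmul_eq_mul, Int.cast_negOnePow_natCast,
    add_right_comm, add_sub_cancel_right]

theorem Ring.choose_add_mul_choose {R : Type*} [CommRing R] [BinomialRing R] (r : R) (j g : ℕ) :
    Ring.choose r (j + g) * ((j + g).choose g : R) = Ring.choose r j * Ring.choose (r - j) g := by
  have h := Ring.choose_smul_choose r (Nat.le_add_right j g)
  rwa [Nat.add_sub_cancel_left, nsmul_eq_mul, Nat.choose_symm_add, mul_comm] at h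

theorem Ring.sum_range_choose_mul_choose_add_mul_choose {R : Type*} [CommRing R] [BinomialRing R]
    (q m p : R) (j₁ j₂ : ℕ) (hq : q = m + p - j₁ - j₂) :
    ∑ c ∈ range (j₂ + 1),
      Ring.choose (q + c) c * (-1) ^ c *
        (Ring.choose m (j₁ + (j₂ - c)) * (-1) ^ (j₁ + (j₂ - c)) *
          ((j₁ + (j₂ - c)).choose (j₂ - c) : R) * (-1) ^ (j₂ - c)) =
      Ring.choose m j₁ * (-1) ^ j₁ * Ring.choose p j₂ * (-1) ^ j₂ := by
  have hterm : ∀ c ∈ range (j₂ + 1),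
      Ring.choose (q + c) c * (-1) ^ c *
        (Ring.choose m (j₁ + (j₂ - c)) * (-1) ^ (j₁ + (j₂ - c)) *
          ((j₁ + (j₂ - c)).choose (j₂ - c) : R) * (-1) ^ (j₂ - c)) =
      (-1) ^ j₁ * Ring.choose m j₁ *
        (Ring.choose (-q - 1) c * Ring.choose (m - j₁) (j₂ - c)) := by
    intro c _
    have hsign : (-1 : R) ^ (j₂ - c) * (-1) ^ (j₂ - c) = 1 := by
      rw [← pow_add, Even.neg_one_pow ⟨_, rfl⟩]
    rw [Ring.choose_neg_sub_one]
    linear_combination (-1) ^ j₁ * Ring.choose (q + c) c * (-1) ^ c *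
      (Ring.choose m (j₁ + (j₂ - c)) * ((j₁ + (j₂ - c)).choose (j₂ - c) : R) * hsign +
        Ring.choose_add_mul_choose m j₁ (j₂ - c))
  have hvandermonde := Ring.add_choose_eq (r := -q - 1) (s := m - j₁) j₂ (Commute.all _ _)
  rw [Nat.sum_antidiagonal_eq_sum_range_succ_mk,
    show -q - 1 + (m - j₁) = -(p - j₂) - 1 by rw [hq]; ring, Ring.choose_neg_sub_one,
    sub_add_cancel] at hvandermonde
  rw [sum_congr rfl hterm, ← mul_sum, ← hvandermonde]
  ring

theorem genChoose_eq_choose (m : ℤ) (j : ℕ) : genChoose m j = Ring.choose (m : ℂ) j := by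
  rw [genChoose, Ring.choose_eq_smul, ← aeval_eq_smeval, aeval_def, eval₂_eq_eval_map,
    descPochhammer_map, descPochhammer_eval_eq_prod_range, smul_eq_mul, div_eq_inv_mul]

theorem deltaCoeffA_eq_zero_of_ne {a b : ℤ} {c : ℕ} (h : b ≠ -a - 1 - c) :
    deltaCoeffA a b c = 0 :=
  if_neg fun ha => h (by omega)

theorem rhsDeltaCoeff_eq_sum_range (e₀ e₁ e₂ : ℤ) (j₁ j₂ : ℕ) :
    rhsDeltaCoeff e₀ e₁ e₂ j₁ j₂ =
      ∑ c ∈ range (j₂ + 1), deltaCoeffA e₀ (-e₀ - 1 - c) c *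
        deltaCoeffB e₁ (e₂ - (-e₀ - 1 - c)) j₁ (j₂ - c) := by
  have hzero : ∀ c : ℕ, ∀ b ≠ -e₀ - 1 - c,
      deltaCoeffA e₀ b c * deltaCoeffB e₁ (e₂ - b) j₁ (j₂ - c) = 0 := fun c b hb => by
    rw [deltaCoeffA_eq_zero_of_ne hb, zero_mul]
  rw [rhsDeltaCoeff, Summable.tsum_finsetSum
    (f := fun c b => deltaCoeffA e₀ b c * deltaCoeffB e₁ (e₂ - b) j₁ (j₂ - c)) fun c _ =>
    summable_of_ne_finset_zero (s := {-e₀ - 1 - (c : ℤ)}) fun b hb =>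
      hzero c b (by simpa using hb)]
  exact sum_congr rfl fun c _ => tsum_eq_single _ (hzero c)

/-- the formal delta-function identity
`x₁⁻¹δ((x₀-y₁)/x₁) x₂⁻¹δ((x₀-y₂)/x₂) = x₂⁻¹δ((x₀-y₂)/x₂) x₁⁻¹δ((x₂-(y₁-y₂))/x₁)`
in `ℂ[y₁,y₂]((x₀⁻¹))[[x₁^{±1}, x₂^{±1}]]`, stated coefficientwise. -/
theorem stmt_9 (e₀ e₁ e₂ : ℤ) (j₁ j₂ : ℕ) :
    lhsDeltaCoeff e₀ e₁ e₂ j₁ j₂ = rhsDeltaCoeff e₀ e₁ e₂ j₁ j₂ := by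
  rw [rhsDeltaCoeff_eq_sum_range, lhsDeltaCoeff]
  by_cases h : e₀ = (-e₁ - 1 - (j₁ : ℤ)) + (-e₂ - 1 - (j₂ : ℤ))
  · rw [if_pos h, genChoose_eq_choose, genChoose_eq_choose,
      ← Ring.sum_range_choose_mul_choose_add_mul_choose (e₀ : ℂ) _ _ j₁ j₂ (by push_cast [h]; ring)]
    refine sum_congr rfl fun c hc => ?_
    have hc : c ≤ j₂ := Nat.lt_succ_iff.mp (mem_range.mp hc)
    rw [deltaCoeffA, if_pos (by omega), deltaCoeffB, if_pos (by omega), genChoose_eq_choose,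
      genChoose_eq_choose, show -(-e₀ - 1 - (c : ℤ)) - 1 = e₀ + c by ring]
    push_cast
    rfl
  · rw [if_neg h]
    refine (sum_eq_zero fun c hc => ?_).symm
    have hc : c ≤ j₂ := Nat.lt_succ_iff.mp (mem_range.mp hc)
    rw [deltaCoeffB, if_neg (by omega), mul_zero]
end
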